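/- Let G = HK be a central product of subgroups H and K, with g̃ = h̃·k̃ and g' = h'·k' (h̃, h' ∈ H, k̃, k' ∈ K). Then g̃ and g' are conjugate in G if and only if the set h'⁻¹·C^H_{h̃} ∩ k'·C^K_{k̃⁻¹} is nonempty, where C^H_{h̃} denotes the conjugacy class of h̃ in H and C^K_{k̃⁻¹} that of k̃⁻¹ in K. -/
import Mathlib

private lemma central_product_conj_key {G : Type*} [Group G] (H K : Subgroup G)
    (hcomm : ∀ h ∈ H, ∀ k ∈ K, h * k = k * h)
    {h a k b : G} (hh : h ∈ H) (ha : a ∈ H) (hk : k ∈ K) (hb : b ∈ K) :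
    (h * k) * (a * b) * (h * k)⁻¹ = (h * a * h⁻¹) * (k * b * k⁻¹) := by
  have c1 : a * k = k * a := hcomm a ha k hk
  have c2 : k * b * k⁻¹ * h⁻¹ = h⁻¹ * (k * b * k⁻¹) :=
    (hcomm h⁻¹ (inv_mem hh) _ (mul_mem (mul_mem hk hb) (inv_mem hk))).symm
  calc (h * k) * (a * b) * (h * k)⁻¹
      = h * (k * a) * (b * k⁻¹) * h⁻¹ := by group
    _ = h * (a * k) * (b * k⁻¹) * h⁻¹ := by rw [c1]
    _ = h * a * (k * b * k⁻¹ * h⁻¹) := by group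
    _ = h * a * (h⁻¹ * (k * b * k⁻¹)) := by rw [c2]
    _ = (h * a * h⁻¹) * (k * b * k⁻¹) := by group

/-- Let `G = HK` be a central product of subgroups `H` and `K`, with
`g̃ = h̃·k̃` and `g' = h'·k'` (`h̃, h' ∈ H`, `k̃, k' ∈ K`). Then `g̃` and `g'`
are conjugate in `G` if and only if `h'⁻¹·C^H_{h̃} ∩ k'·C^K_{k̃⁻¹}` is
nonempty, where `C^H_{h̃}` is the conjugacy class of `h̃` in `H` and
`C^K_{k̃⁻¹}` that of `k̃⁻¹` in `K`. -/
theorem central_product_isConj_iff {G : Type*} [Group G] (H K : Subgroup G)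
    (hprod : ∀ g : G, ∃ h ∈ H, ∃ k ∈ K, g = h * k)
    (hcomm : ∀ h ∈ H, ∀ k ∈ K, h * k = k * h)
    (ht hs : G) (hht : ht ∈ H) (hhs : hs ∈ H)
    (kt ks : G) (hkt : kt ∈ K) (hks : ks ∈ K) :
    IsConj (ht * kt) (hs * ks) ↔
      ({w : G | ∃ u ∈ H, w = hs⁻¹ * (u⁻¹ * ht * u)} ∩
        {w : G | ∃ u ∈ K, w = ks * (u⁻¹ * kt⁻¹ * u)}).Nonempty := by
  constructor
  · rintro hc
    rw [isConj_iff] at hc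
    obtain ⟨c, hc⟩ := hc
    obtain ⟨h, hH, k, kK, rfl⟩ := hprod c
    have key := central_product_conj_key H K hcomm hH hht kK hkt
    rw [hc] at key
    -- key : hs * ks = (h * ht * h⁻¹) * (k * kt * k⁻¹)
    refine ⟨hs⁻¹ * (h * ht * h⁻¹), ⟨h⁻¹, inv_mem hH, by group⟩,
      ⟨k⁻¹, inv_mem kK, ?_⟩⟩
    have : hs⁻¹ * (h * ht * h⁻¹) = ks * (k * kt * k⁻¹)⁻¹ := by
      calc hs⁻¹ * (h * ht * h⁻¹)
          = hs⁻¹ * (h * ht * h⁻¹ * (k * kt * k⁻¹)) * (k * kt * k⁻¹)⁻¹ := by group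
        _ = hs⁻¹ * (hs * ks) * (k * kt * k⁻¹)⁻¹ := by rw [← key]
        _ = ks * (k * kt * k⁻¹)⁻¹ := by group
    rw [this]; group
  · rintro ⟨w, ⟨u, hu, hw1⟩, ⟨v, hv, hw2⟩⟩
    rw [isConj_iff]
    refine ⟨u⁻¹ * v⁻¹, ?_⟩
    have key := central_product_conj_key H K hcomm (inv_mem hu) hht (inv_mem hv) hkt
    rw [key]
    have e : u⁻¹ * ht * u = hs * (ks * (v⁻¹ * kt⁻¹ * v)) := by
      rw [← hw2, hw1]; group
    calc u⁻¹ * ht * u⁻¹⁻¹ * (v⁻¹ * kt * v⁻¹⁻¹)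
        = (u⁻¹ * ht * u) * (v⁻¹ * kt * v) := by group
      _ = hs * (ks * (v⁻¹ * kt⁻¹ * v)) * (v⁻¹ * kt * v) := by rw [e]
      _ = hs * ks := by group
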